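/- For 0 < β ≤ 1 and any real α, Re ∫_{-∞}^{∞} Li_1(±β e^{2iαx - x²}) dx equals Re ∫_{-∞}^{∞} Li_1(±β e^{-α² - x²}) dx; in particular for 0 < β < 1, Re log(1 - β e^{-α²-x²}) < Re log(1 + β e^{-α²-x²}) pointwise in x. -/

import Mathlib

/-! Expanding `Li₁ w = ∑ wⁿ⁺¹/(n+1)`, valid for `‖w‖ < 1` and hence for every `x ≠ 0`, and
integrating term by term, the `n`-th term is the Gaussian integral
`∫ exp((n+1)(-x² + u x + v)) = √(π/(n+1)) exp((n+1)(v + u²/4))`. So the integral depends on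
`u, v` only through `v + u²/4` (this is the contour shift `x ↦ x + u/2`), and `u = 2iα, v = 0`
gives the same value `-α²` as `u = 0, v = -α²`. The term-by-term integration is justified by
the bound `√π (n+1)^(-3/2)` on the `L¹` norms of the terms, which is where `‖c‖ ≤ 1` enters. -/

open Complex MeasureTheory

noncomputable def Li1 (z : ℂ) : ℂ := -Complex.log (1 - z)

open scoped Real

lemma hasSum_Li1 {z : ℂ} (hz : ‖z‖ < 1) :
    HasSum (fun n : ℕ ↦ z ^ (n + 1) / (n + 1)) (Li1 z) := by
  have h := (hasSum_nat_add_iff' 1).mpr (hasSum_taylorSeries_neg_log hz)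
  simpa [Li1] using h

lemma summable_inv_succ_mul_sqrt_div_succ (a : ℝ) :
    Summable fun n : ℕ ↦ ((n : ℝ) + 1)⁻¹ * √(a / (n + 1)) := by
  have h : Summable fun n : ℕ ↦ √a * (((n + 1 : ℕ) : ℝ) ^ (3 / 2 : ℝ))⁻¹ :=
    ((summable_nat_add_iff 1).mpr (Real.summable_nat_rpow_inv.mpr (by norm_num))).mul_left _
  refine h.congr fun n ↦ ?_
  have hn : (0 : ℝ) < n + 1 := by positivity
  push_cast
  rw [Real.sqrt_div' _ hn.le, show (3 / 2 : ℝ) = 1 + 1 / 2 by norm_num,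
    Real.rpow_add hn, Real.rpow_one, ← Real.sqrt_eq_rpow]
  field_simp

section GaussianLi1

variable {u v : ℂ}

lemma re_neg_sq_add_mul_add (hu : u.re = 0) (x : ℝ) :
    (-(x : ℂ) ^ 2 + u * x + v).re = -x ^ 2 + v.re := by
  simp [← ofReal_pow, hu]

lemma norm_cexp_neg_sq_add_mul_add_lt_one (hu : u.re = 0) (hv : v.re ≤ 0) {x : ℝ} (hx : x ≠ 0) :
    ‖cexp (-(x : ℂ) ^ 2 + u * x + v)‖ < 1 := by
  rw [norm_exp, re_neg_sq_add_mul_add hu, Real.exp_lt_one_iff]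
  nlinarith [sq_pos_of_ne_zero hx]

lemma re_neg_natCast_add_one_neg (n : ℕ) : (-((n : ℂ) + 1)).re < 0 := by
  simp only [neg_re, add_re, natCast_re, one_re]
  linarith [n.cast_nonneg (α := ℝ)]

lemma succ_mul_neg_sq_add_mul_add (n : ℕ) (x : ℝ) :
    ((n : ℂ) + 1) * (-(x : ℂ) ^ 2 + u * x + v)
      = -((n : ℂ) + 1) * (x : ℂ) ^ 2 + ((n + 1) * u) * x + (n + 1) * v := by
  ring

lemma integrable_cexp_succ_mul_quadratic (n : ℕ) :
    Integrable fun x : ℝ ↦ cexp ((n + 1) * (-(x : ℂ) ^ 2 + u * x + v)) := by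
  simp_rw [succ_mul_neg_sq_add_mul_add]
  exact integrable_cexp_quadratic' (re_neg_natCast_add_one_neg n) _ _

lemma integral_cexp_succ_mul_quadratic (n : ℕ) :
    ∫ x : ℝ, cexp ((n + 1) * (-(x : ℂ) ^ 2 + u * x + v))
      = (π / (n + 1)) ^ (1 / 2 : ℂ) * cexp ((n + 1) * (v + u ^ 2 / 4)) := by
  have hn : (n : ℂ) + 1 ≠ 0 := by exact_mod_cast n.succ_ne_zero
  simp_rw [succ_mul_neg_sq_add_mul_add]
  rw [integral_cexp_quadratic (re_neg_natCast_add_one_neg n), neg_neg]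
  congr 2
  field_simp
  ring

lemma integral_norm_cexp_succ_mul_quadratic_le (hu : u.re = 0) (hv : v.re ≤ 0) (n : ℕ) :
    ∫ x : ℝ, ‖cexp ((n + 1) * (-(x : ℂ) ^ 2 + u * x + v))‖ ≤ √(π / (n + 1)) := by
  have hn : (0 : ℝ) < n + 1 := by positivity
  rw [← integral_gaussian]
  refine integral_mono (integrable_cexp_succ_mul_quadratic n).norm
    (integrable_exp_neg_mul_sq hn) fun x ↦ ?_
  rw [norm_exp, Real.exp_le_exp, show ((n : ℂ) + 1) = ((n + 1 : ℝ) : ℂ) by push_cast; rfl,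
    re_ofReal_mul, re_neg_sq_add_mul_add hu]
  nlinarith

theorem integral_Li1_mul_cexp_quadratic {c : ℂ} (hc : ‖c‖ ≤ 1) (hu : u.re = 0) (hv : v.re ≤ 0) :
    ∫ x : ℝ, Li1 (c * cexp (-(x : ℂ) ^ 2 + u * x + v))
      = ∑' n : ℕ, c ^ (n + 1) / (n + 1) *
          ((π / (n + 1)) ^ (1 / 2 : ℂ) * cexp ((n + 1) * (v + u ^ 2 / 4))) := by
  set F : ℕ → ℝ → ℂ := fun n x ↦
    c ^ (n + 1) / (n + 1) * cexp ((n + 1) * (-(x : ℂ) ^ 2 + u * x + v))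
  have hF_int (n : ℕ) : Integrable (F n) :=
    (integrable_cexp_succ_mul_quadratic n).const_mul _
  have hF_norm (n : ℕ) : ∫ x, ‖F n x‖ ≤ ((n : ℝ) + 1)⁻¹ * √(π / (n + 1)) := by
    simp only [F, norm_mul, integral_const_mul]
    gcongr
    · rw [norm_div, norm_pow, ← Nat.cast_add_one, norm_natCast, div_eq_mul_inv]
      push_cast
      exact mul_le_of_le_one_left (by positivity) (pow_le_one₀ (norm_nonneg _) hc)
    · exact integral_norm_cexp_succ_mul_quadratic_le hu hv n
  have hF_sum : Summable fun n ↦ ∫ x, ‖F n x‖ :=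
    (summable_inv_succ_mul_sqrt_div_succ π).of_nonneg_of_le
      (fun n ↦ integral_nonneg fun x ↦ norm_nonneg _) hF_norm
  have hF_hasSum : ∀ᵐ x : ℝ, HasSum (F · x) (Li1 (c * cexp (-(x : ℂ) ^ 2 + u * x + v))) := by
    filter_upwards [Measure.ae_ne volume 0] with x hx
    convert hasSum_Li1 ((norm_mul_le _ _).trans_lt
      (mul_lt_one_of_nonneg_of_lt_one_right hc (norm_nonneg _)
        (norm_cexp_neg_sq_add_mul_add_lt_one hu hv hx))) using 2 with n
    rw [mul_pow, ← exp_nat_mul]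
    push_cast
    ring
  rw [integral_congr_ae (hF_hasSum.mono fun x hx ↦ hx.tsum_eq.symm),
    ← integral_tsum_of_summable_integral_norm hF_int hF_sum]
  simp only [F, integral_const_mul, integral_cexp_succ_mul_quadratic]

end GaussianLi1

theorem integral_Li1_mul_cexp_quadratic_congr {c u v u' v' : ℂ} (hc : ‖c‖ ≤ 1)
    (hu : u.re = 0) (hv : v.re ≤ 0) (hu' : u'.re = 0) (hv' : v'.re ≤ 0)
    (h : v + u ^ 2 / 4 = v' + u' ^ 2 / 4) :
    ∫ x : ℝ, Li1 (c * cexp (-(x : ℂ) ^ 2 + u * x + v))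
      = ∫ x : ℝ, Li1 (c * cexp (-(x : ℂ) ^ 2 + u' * x + v')) := by
  rw [integral_Li1_mul_cexp_quadratic hc hu hv, integral_Li1_mul_cexp_quadratic hc hu' hv', h]

lemma log_one_sub_lt_log_one_add {t : ℝ} (h0 : 0 < t) (h1 : t < 1) :
    Real.log (1 - t) < Real.log (1 + t) :=
  Real.log_lt_log (by linarith) (by linarith)

/-- For `0 < β ≤ 1` and real `α`, the real part of the spiral integral
`∫ Li₁(±β e^{2iαx-x²}) dx` equals the real part of `∫ Li₁(±β e^{-α²-x²}) dx`
(contour shifting), and pointwise (for `0 < β < 1`)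
`Re log(1 - β e^{-α²-x²}) < Re log(1 + β e^{-α²-x²})`. -/
theorem contour_shift_and_pointwise (β α : ℝ) (h0 : 0 < β) (h1 : β ≤ 1) :
    (∀ ε : ℝ, ε = 1 ∨ ε = -1 →
      (∫ x : ℝ, Li1 ((ε : ℂ) * (β : ℂ) *
          Complex.exp (2 * Complex.I * (α : ℂ) * (x : ℂ) - (x : ℂ) ^ 2))).re
        = (∫ x : ℝ, Li1 ((ε : ℂ) * (β : ℂ) *
          Complex.exp (-(α : ℂ) ^ 2 - (x : ℂ) ^ 2))).re) ∧
    (β < 1 → ∀ x : ℝ,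
      Real.log (1 - β * Real.exp (-α ^ 2 - x ^ 2))
        < Real.log (1 + β * Real.exp (-α ^ 2 - x ^ 2))) := by
  refine ⟨fun ε hε ↦ ?_, fun hβ x ↦ ?_⟩
  · have hc : ‖(ε : ℂ) * β‖ ≤ 1 := by
      rcases hε with rfl | rfl <;> simp [abs_of_pos h0, h1]
    have hshift := integral_Li1_mul_cexp_quadratic_congr hc (u := 2 * I * α) (v := 0)
      (u' := 0) (v' := -α ^ 2) (by simp) (by simp) (by simp)
      (by simp [← ofReal_pow]; positivity) (by ring_nf; rw [I_sq]; ring)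
    congr 1
    convert hshift using 6 <;> ring
  · have he : Real.exp (-α ^ 2 - x ^ 2) ≤ 1 := Real.exp_le_one_iff.mpr (by nlinarith)
    exact log_one_sub_lt_log_one_add (by positivity)
      (mul_lt_one_of_nonneg_of_lt_one_left h0.le hβ he)
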